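/- arXiv:2301.08538 — 7 statements merged into one kernel-verified Lean document; each statement's English description precedes it below -/
import Mathlib

section
/- Let C be a bounded join-semilattice and S ⊆ C a finite subset. Then the maps α_S, α_{Ŝ} and α_{S̃} from C to C are all equal; that is, for every c ∈ C, sup(S ∩ ↓c) = sup(Ŝ ∩ ↓c) = sup(S̃ ∩ ↓c). -/
open Finset CategoryTheory

set_option linter.unusedSectionVars false

variable {C : Type*} [SemilatticeSup C] [OrderBot C] [DecidableEq C]

/-- `hatF S` is the set of joins (minimal upper bounds) of non-empty subsets of `S`. -/
noncomputable def hatF (S : Finset C) : Finset C :=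
  ((S.powerset.filter (fun T => T.Nonempty)).attach).image
    (fun T => T.1.sup' (Finset.mem_filter.mp T.2).2 id)

/-- `tildeF S = hatF S ∪ {⊥}`. -/
noncomputable def tildeF (S : Finset C) : Finset C := insert ⊥ (hatF S)

/-- `alphaF S c` is the join of the elements of `S` lying below `c`. -/
noncomputable def alphaF (S : Finset C) (c : C) : C :=
  letI := Classical.decPred (fun x : C => x ≤ c)
  (S.filter (fun x => x ≤ c)).sup id

lemma alphaF_le (S : Finset C) (c : C) : alphaF S c ≤ c := by
  classical
  exact Finset.sup_le fun x hx => (Finset.mem_filter.mp hx).2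

lemma alphaF_mono (S : Finset C) : Monotone (alphaF S) := by
  intro c d h
  classical
  exact Finset.sup_mono (Finset.monotone_filter_right S (fun x _ hx => le_trans hx h))

lemma alphaF_le_iff {S : Finset C} {c d : C} :
    alphaF S c ≤ d ↔ ∀ x ∈ S, x ≤ c → x ≤ d := by
  classical
  simp [alphaF]

lemma le_alphaF_of_mem {S : Finset C} {x c : C} (hx : x ∈ S) (hxc : x ≤ c) :
    x ≤ alphaF S c := by
  classical
  exact Finset.le_sup (f := id) (Finset.mem_filter.mpr ⟨hx, hxc⟩)

lemma alphaF_le_alphaF_of_subset {S T : Finset C} (hST : S ⊆ T) (c : C) :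
    alphaF S c ≤ alphaF T c :=
  alphaF_le_iff.mpr fun _ hx hxc => le_alphaF_of_mem (hST hx) hxc

/-- `t ≤ alphaF S t` says that `t` is a join of elements of `S`; adding such elements to `S`
does not change `alphaF S`. -/
lemma alphaF_eq_of_subset_of_le_alphaF {S T : Finset C} (hST : S ⊆ T)
    (hT : ∀ t ∈ T, t ≤ alphaF S t) (c : C) : alphaF S c = alphaF T c :=
  (alphaF_le_alphaF_of_subset hST c).antisymm <|
    alphaF_le_iff.mpr fun t ht htc => (hT t ht).trans (alphaF_mono S htc)

lemma mem_hatF {S : Finset C} {x : C} :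
    x ∈ hatF S ↔ ∃ T ⊆ S, ∃ h : T.Nonempty, T.sup' h id = x := by
  simp only [hatF, Finset.mem_image, Finset.mem_attach, true_and, Subtype.exists,
    Finset.mem_filter, Finset.mem_powerset]
  exact ⟨fun ⟨T, ⟨hTS, hT⟩, hx⟩ => ⟨T, hTS, hT, hx⟩, fun ⟨T, hTS, hT, hx⟩ => ⟨T, ⟨hTS, hT⟩, hx⟩⟩

lemma subset_hatF (S : Finset C) : S ⊆ hatF S := fun x hx =>
  mem_hatF.mpr ⟨{x}, Finset.singleton_subset_iff.mpr hx, Finset.singleton_nonempty x, rfl⟩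

lemma le_alphaF_of_mem_hatF {S : Finset C} {x : C} (hx : x ∈ hatF S) : x ≤ alphaF S x := by
  obtain ⟨T, hTS, hT, rfl⟩ := mem_hatF.mp hx
  exact Finset.sup'_le hT id fun t ht => le_alphaF_of_mem (hTS ht) (Finset.le_sup' id ht)

lemma le_alphaF_of_mem_tildeF {S : Finset C} {x : C} (hx : x ∈ tildeF S) : x ≤ alphaF S x := by
  rcases Finset.mem_insert.mp hx with rfl | hx
  · exact bot_le
  · exact le_alphaF_of_mem_hatF hx

theorem stmt2 (S : Finset C) (c : C) :
    alphaF S c = alphaF (hatF S) c ∧ alphaF S c = alphaF (tildeF S) c :=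
  ⟨alphaF_eq_of_subset_of_le_alphaF (subset_hatF S) (fun _ => le_alphaF_of_mem_hatF) c,
    alphaF_eq_of_subset_of_le_alphaF ((subset_hatF S).trans (Finset.subset_insert _ _))
      (fun _ => le_alphaF_of_mem_tildeF) c⟩
end

section
/- Let C be a bounded join-semilattice, S ⊆ C a finite subset, and α(c) = sup(S̃ ∩ ↓c). Then for all c ∈ C, Ŝ ∩ ↓α(c) = Ŝ ∩ ↓c; i.e. an element of Ŝ lies below c if and only if it lies below α(c). -/
open Finset CategoryTheory

set_option linter.unusedSectionVars false

variable {C : Type*} [SemilatticeSup C] [OrderBot C] [DecidableEq C]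

theorem le_alphaF_iff {α : Type*} [SemilatticeSup α] [OrderBot α] {T : Finset α} {x : α}
    (hx : x ∈ T) (c : α) : x ≤ alphaF T c ↔ x ≤ c := by
  classical
  unfold alphaF
  exact ⟨fun h => h.trans (Finset.sup_le fun y hy => (mem_filter.mp hy).2),
    fun h => le_sup (f := id) (mem_filter.mpr ⟨hx, h⟩)⟩

theorem stmt3 (S : Finset C) (c : C) :
    {x : C | x ∈ hatF S ∧ x ≤ alphaF (tildeF S) c} = {x : C | x ∈ hatF S ∧ x ≤ c} :=
  Set.ext fun _ => and_congr_right fun hx => le_alphaF_iff (mem_insert_of_mem hx) c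
end

section
/- Let C be a bounded join-semilattice, R a commutative ring, M a functor from C (as a category) to R-modules, and S ⊆ C a finite subset. The following are equivalent: (1) for all c ≤ d in C, if S ∩ ↓c = S ∩ ↓d then the map M(c ≤ d) : M(c) → M(d) is an isomorphism; (2) the natural transformation T_α : res_α res_{S̃} M → M, given at c by M(α(c) ≤ c) : M(α(c)) → M(c), is an isomorphism; (3) there exists a functor N : S̃ → R-Mod such that M is naturally isomorphic to N ∘ α (i.e. α encodes M). -/
open Finset CategoryTheory

set_option linter.unusedSectionVars false

variable {C : Type*} [SemilatticeSup C] [OrderBot C] [DecidableEq C]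

/-!
The map `α = alphaF (tildeF S)` is an interior operator (monotone, deflationary, idempotent) whose
value at `c` depends only on `S ∩ ↓c`, because every element of `S̃` is the join of the elements
of `S` below it; conversely `S ∩ ↓(α c) = S ∩ ↓c`. Hence (1) is exactly the invertibility of the
maps `M(α c ≤ c)`, which makes `T_α : M ∘ α ⟶ M` a natural isomorphism, giving (3) with `N = M`;
and if `M ≅ N ∘ α`, idempotence of `α` sends `α c ≤ c` to an identity under `N ∘ α`.
-/

section InteriorOperator

variable {P : Type*} [Preorder P] {D : Type*} [Category D] {α : P → P}

/-- Whiskered by `M`, this is the paper's `T_α : M ∘ α ⟶ M`. -/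
def Monotone.toIdOfLE (hα : Monotone α) (hle : ∀ c, α c ≤ c) : hα.functor ⟶ 𝟭 P where
  app c := homOfLE (hle c)

lemma isIso_map_of_eq (M : P ⥤ D) {a b : P} (h : a = b) (f : a ⟶ b) : IsIso (M.map f) := by
  subst h
  rw [Subsingleton.elim f (𝟙 a)]
  infer_instance

lemma isIso_map_homOfLE_of_apply_eq (M : P ⥤ D) (hle : ∀ c, α c ≤ c)
    (hM : ∀ c, IsIso (M.map (homOfLE (hle c)))) {c d : P} (hcd : c ≤ d) (hαcd : α c = α d) :
    IsIso (M.map (homOfLE hcd)) := by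
  -- `M(c ≤ d) ∘ M(α c ≤ c) = M(α d ≤ d)` up to `eqToHom`, and two of the three maps are isos
  have : IsIso (M.map (homOfLE (hle c) ≫ homOfLE hcd)) := by
    rw [Subsingleton.elim (homOfLE (hle c) ≫ homOfLE hcd)
      (eqToHom hαcd ≫ homOfLE (hle d)), M.map_comp]
    infer_instance
  rw [M.map_comp] at this
  exact IsIso.of_isIso_comp_left (M.map (homOfLE (hle c))) _

lemma Monotone.nonempty_functor_comp_iso_of_isIso (hα : Monotone α) (hle : ∀ c, α c ≤ c)
    (M : P ⥤ D) (hM : ∀ c, IsIso (M.map (homOfLE (hle c)))) :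
    Nonempty (hα.functor ⋙ M ≅ M) :=
  have : ∀ c, IsIso ((Functor.whiskerRight (hα.toIdOfLE hle) M).app c) := hM
  have := NatIso.isIso_of_isIso_app (Functor.whiskerRight (hα.toIdOfLE hle) M)
  ⟨asIso (Functor.whiskerRight (hα.toIdOfLE hle) M)⟩

lemma Monotone.isIso_map_homOfLE_of_iso (hα : Monotone α) (hle : ∀ c, α c ≤ c)
    (hidem : ∀ c, α (α c) = α c) {M N : P ⥤ D} (e : hα.functor ⋙ N ≅ M) (c : P) :
    IsIso (M.map (homOfLE (hle c))) :=
  (NatIso.isIso_map_iff e _).mp (isIso_map_of_eq N (hidem c) _)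

end InteriorOperator

lemma le_alphaF {T : Finset C} {t c : C} (ht : t ∈ T) (h : t ≤ c) : t ≤ alphaF T c := by
  classical
  exact Finset.le_sup (f := id) (Finset.mem_filter.mpr ⟨ht, h⟩)

lemma alphaF_idem (T : Finset C) (c : C) : alphaF T (alphaF T c) = alphaF T c := by
  classical
  refine le_antisymm (alphaF_le _ _) (Finset.sup_le fun x hx => ?_)
  obtain ⟨hxT, hxc⟩ := Finset.mem_filter.mp hx
  exact le_alphaF hxT (le_alphaF hxT hxc)

lemma alphaF_congr {T : Finset C} {c d : C} (h : ∀ t ∈ T, t ≤ c ↔ t ≤ d) :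
    alphaF T c = alphaF T d := by
  unfold alphaF
  -- the two filters are decided by different `Classical.decPred` instances
  exact congrArg (Finset.sup · id) (@Finset.filter_congr _ _ _ (_) (_) _ h)

lemma mem_tildeF_of_mem {S : Finset C} {s : C} (hs : s ∈ S) : s ∈ tildeF S := by
  refine Finset.mem_insert_of_mem (Finset.mem_image.mpr ⟨⟨{s}, ?_⟩, Finset.mem_attach _ _, ?_⟩)
  · exact Finset.mem_filter.mpr
      ⟨Finset.mem_powerset.mpr (Finset.singleton_subset_iff.mpr hs), Finset.singleton_nonempty s⟩
  · exact Finset.sup'_singleton _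

lemma le_of_mem_tildeF {S : Finset C} {t c : C} (ht : t ∈ tildeF S)
    (h : ∀ s ∈ S, s ≤ t → s ≤ c) : t ≤ c := by
  rcases Finset.mem_insert.mp ht with rfl | ht
  · exact bot_le
  obtain ⟨⟨U, hU⟩, -, rfl⟩ := Finset.mem_image.mp ht
  have hUS := Finset.mem_powerset.mp (Finset.mem_filter.mp hU).1
  exact Finset.sup'_le _ _ fun u hu => h u (hUS hu) (Finset.le_sup' id hu)

lemma alphaF_tildeF_eq_of_inter_eq {S : Finset C} {c d : C}
    (hcd : {x : C | x ∈ S ∧ x ≤ c} = {x : C | x ∈ S ∧ x ≤ d}) :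
    alphaF (tildeF S) c = alphaF (tildeF S) d := by
  have hS : ∀ s ∈ S, s ≤ c ↔ s ≤ d := fun s hs => by
    simpa [hs] using Set.ext_iff.mp hcd s
  refine alphaF_congr fun t ht => ⟨fun htc => ?_, fun htd => ?_⟩
  · exact le_of_mem_tildeF ht fun s hs hst => (hS s hs).mp (hst.trans htc)
  · exact le_of_mem_tildeF ht fun s hs hst => (hS s hs).mpr (hst.trans htd)

lemma inter_alphaF_tildeF (S : Finset C) (c : C) :
    {x : C | x ∈ S ∧ x ≤ alphaF (tildeF S) c} = {x : C | x ∈ S ∧ x ≤ c} := by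
  ext x
  exact ⟨fun ⟨hx, h⟩ => ⟨hx, h.trans (alphaF_le _ _)⟩,
    fun ⟨hx, h⟩ => ⟨hx, le_alphaF (mem_tildeF_of_mem hx) h⟩⟩

theorem stmt4 (R : Type) [CommRing R] (S : Finset C) (M : C ⥤ ModuleCat R) :
    ((∀ (c d : C) (h : c ≤ d),
        {x : C | x ∈ S ∧ x ≤ c} = {x : C | x ∈ S ∧ x ≤ d} → IsIso (M.map (homOfLE h)))
      ↔ (∀ c : C, IsIso (M.map (homOfLE (alphaF_le (tildeF S) c))))) ∧
    ((∀ c : C, IsIso (M.map (homOfLE (alphaF_le (tildeF S) c))))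
      ↔ ∃ N : C ⥤ ModuleCat R, Nonempty ((alphaF_mono (tildeF S)).functor ⋙ N ≅ M)) := by
  have hle := alphaF_le (tildeF S)
  have hmono := alphaF_mono (tildeF S)
  refine ⟨⟨fun h1 c => h1 _ _ (hle c) (inter_alphaF_tildeF S c), ?_⟩, ⟨?_, ?_⟩⟩
  · intro hM c d hcd hS
    exact isIso_map_homOfLE_of_apply_eq M hle hM hcd (alphaF_tildeF_eq_of_inter_eq hS)
  · exact fun hM => ⟨M, hmono.nonempty_functor_comp_iso_of_isIso hle M hM⟩
  · rintro ⟨N, ⟨e⟩⟩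
    exact hmono.isIso_map_homOfLE_of_iso hle (alphaF_idem _) e
end

section
/- Let S = S₁ × ⋯ × Sₙ ⊆ Z̄ⁿ be a finite cartesian subset, S̄ = ∏ᵢ (Sᵢ ∪ {−∞}), and α : Z̄ⁿ → S̄ the map α(c) = sup(S̄ ∩ ↓c). For every c ∈ Z̄ⁿ there exists c' ∈ ℤⁿ with c ≤ c' and α(d) = α(c) for all d with c ≤ d ≤ c'. Consequently, for any functor N from S̄ to R-modules, the limit of N(α(d)) over d ∈ ℤⁿ with d ≥ c is isomorphic to N(α(c)). -/
open Finset CategoryTheory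

attribute [local instance 2000] Preorder.smallCategory

set_option linter.unusedSectionVars false

variable {C : Type*} [SemilatticeSup C] [OrderBot C] [DecidableEq C]

/-- The inclusion `ℤⁿ → Z̄ⁿ`. -/
def embZ {n : ℕ} (d : Fin n → ℤ) : Fin n → WithBot ℤ := fun i => (d i : WithBot ℤ)

lemma embZ_mono {n : ℕ} : Monotone (embZ (n := n)) :=
  fun _ _ h i => WithBot.coe_le_coe.mpr (h i)

/-- The poset of integer points above `c`. -/
def upInt {n : ℕ} (c : Fin n → WithBot ℤ) : Type := {d : Fin n → ℤ // c ≤ embZ d}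

noncomputable instance {n : ℕ} (c : Fin n → WithBot ℤ) : Preorder (upInt c) :=
  Subtype.preorder _

lemma upInt_mono {n : ℕ} (c : Fin n → WithBot ℤ) :
    Monotone (fun d : upInt c => embZ d.1) := fun _ _ h => embZ_mono h

/-- The canonical cone over the diagram `d ↦ N(α(d))`, `d ∈ ℤⁿ`, `d ≥ c`, with apex `N(α(c))`. -/
noncomputable def coneN {n : ℕ} (R : Type) [CommRing R] (Sbar : Finset (Fin n → WithBot ℤ))
    (N : (Fin n → WithBot ℤ) ⥤ ModuleCat R) (c : Fin n → WithBot ℤ) :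
    Limits.Cone ((upInt_mono c).functor ⋙ (alphaF_mono Sbar).functor ⋙ N) where
  pt := N.obj (alphaF Sbar c)
  π :=
    { app := fun d => N.map (homOfLE (alphaF_mono Sbar d.2))
      naturality := fun d e f => by
        simp only [Functor.const_obj_map, Category.id_comp, Functor.comp_map, ← N.map_comp]
        congr 1 }

/-!
Raising each coordinate `cᵢ = ⊥` to an integer below every finite element of `Sᵢ` meets no new
point of `S̄`, which gives `c'` with `α` constant on `[c, c']`. Every `d ≥ c` dominates
`d ⊓ c' ∈ [c, c']`, where the projection of the cone with apex `N(α(c))` is an isomorphism;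
a cone whose projections are isomorphisms on such a coinitial family is a limit.
-/

lemma alphaF_eq_of_le {L : Type*} [SemilatticeSup L] [OrderBot L] (S : Finset L) {c d : L}
    (hcd : c ≤ d) (h : ∀ x ∈ S, x ≤ d → x ≤ c) : alphaF S d = alphaF S c := by
  classical
  unfold alphaF
  exact congrArg _ (Finset.filter_congr fun x hx => ⟨h x hx, fun hxc => hxc.trans hcd⟩)

/-- For `c = ⊥` the witness lies strictly below every finite element of `s`. -/
lemma WithBot.exists_coe_ge_forall_le_imp_le {α : Type*} [LinearOrder α] [NoMinOrder α]
    [Nonempty α] (s : Finset (WithBot α)) (c : WithBot α) :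
    ∃ a : α, c ≤ a ∧ ∀ x ∈ s, x ≤ a → x ≤ c := by
  cases c with
  | coe m => exact ⟨m, le_rfl, fun _ _ hx => hx⟩
  | bot =>
    obtain ⟨b, hb⟩ := (s.preimage WithBot.some WithBot.coe_injective.injOn).bddBelow
    obtain ⟨a, hab⟩ := exists_lt b
    refine ⟨a, bot_le, fun x hx hxa => ?_⟩
    cases x with
    | bot => exact le_rfl
    | coe k =>
      have hbk : b ≤ k := hb (Finset.mem_preimage.mpr hx)
      exact absurd (WithBot.coe_le_coe.mp hxa) (hab.trans_le hbk).not_ge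

lemma WithBot.exists_pi_coe_ge_forall_le_imp_le {ι α : Type*} [LinearOrder α] [NoMinOrder α]
    [Nonempty α] (s : ι → Finset (WithBot α)) (c : ι → WithBot α) :
    ∃ a : ι → α, c ≤ (fun i => (a i : WithBot α)) ∧
      ∀ x : ι → WithBot α, (∀ i, x i ∈ s i) → x ≤ (fun i => (a i : WithBot α)) → x ≤ c := by
  choose a hca ha using fun i => exists_coe_ge_forall_le_imp_le (s i) (c i)
  exact ⟨a, hca, fun x hxs hxa i => ha i (x i) (hxs i) (hxa i)⟩

lemma exists_embZ_ge_alphaF_eq {n : ℕ} (s : Fin n → Finset (WithBot ℤ)) (c : Fin n → WithBot ℤ) :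
    ∃ c' : Fin n → ℤ, c ≤ embZ c' ∧ ∀ d : Fin n → WithBot ℤ, c ≤ d → d ≤ embZ c' →
      alphaF (Fintype.piFinset s) d = alphaF (Fintype.piFinset s) c := by
  obtain ⟨c', hcc', hc'⟩ := WithBot.exists_pi_coe_ge_forall_le_imp_le s c
  refine ⟨c', hcc', fun d hcd hdc' => alphaF_eq_of_le _ hcd fun x hx hxd => ?_⟩
  exact hc' x (Fintype.mem_piFinset.mp hx) (hxd.trans hdc')

noncomputable def Limits.IsLimit.ofIsIsoπApp {J D : Type*} [Category J] [Category D]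
    {F : J ⥤ D} (t : Limits.Cone F) (j₀ : J) [IsIso (t.π.app j₀)]
    (h : ∀ j, ∃ m, Nonempty (m ⟶ j) ∧ Nonempty (m ⟶ j₀) ∧ IsIso (t.π.app m)) :
    Limits.IsLimit t where
  lift s := s.π.app j₀ ≫ inv (t.π.app j₀)
  fac s j := by
    obtain ⟨m, ⟨f⟩, ⟨g⟩, _⟩ := h j
    have hg : F.map g = inv (t.π.app m) ≫ t.π.app j₀ := by rw [IsIso.eq_inv_comp, t.w g]
    have hs : s.π.app j₀ ≫ inv (t.π.app j₀) = s.π.app m ≫ inv (t.π.app m) := by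
      rw [← s.w g, hg]
      simp only [Category.assoc, IsIso.hom_inv_id, Category.comp_id]
    rw [hs, ← s.w f, ← t.w f, Category.assoc, IsIso.inv_hom_id_assoc]
  uniq s m hm := by
    rw [IsIso.eq_comp_inv, hm]

lemma isIso_coneN_π_app {n : ℕ} (R : Type) [CommRing R] (Sbar : Finset (Fin n → WithBot ℤ))
    (N : (Fin n → WithBot ℤ) ⥤ ModuleCat R) {c : Fin n → WithBot ℤ} (d : upInt c)
    (h : alphaF Sbar (embZ d.1) = alphaF Sbar c) : IsIso ((coneN R Sbar N c).π.app d) := by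
  have := homOfLE_isIso_of_eq (alphaF_mono Sbar d.2) h.symm
  exact Functor.map_isIso N (homOfLE (alphaF_mono Sbar d.2))

theorem stmt9 (n : ℕ) (R : Type) [CommRing R] (Si : Fin n → Finset (WithBot ℤ))
    (N : (Fin n → WithBot ℤ) ⥤ ModuleCat R) (c : Fin n → WithBot ℤ) :
    (∃ c' : Fin n → ℤ, c ≤ embZ c' ∧
      ∀ d : Fin n → ℤ, c ≤ embZ d → embZ d ≤ embZ c' →
        alphaF (Fintype.piFinset (fun i => insert ⊥ (Si i))) (embZ d)
          = alphaF (Fintype.piFinset (fun i => insert ⊥ (Si i))) c) ∧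
    Nonempty (Limits.IsLimit (coneN R (Fintype.piFinset (fun i => insert ⊥ (Si i))) N c)) := by
  obtain ⟨c', hcc', hα⟩ := exists_embZ_ge_alphaF_eq (fun i => insert ⊥ (Si i)) c
  refine ⟨⟨c', hcc', fun d hcd hdc' => hα _ hcd hdc'⟩, ⟨?_⟩⟩
  let j₀ : upInt c := ⟨c', hcc'⟩
  have : IsIso ((coneN R _ N c).π.app j₀) := isIso_coneN_π_app R _ N j₀ (hα _ hcc' le_rfl)
  refine Limits.IsLimit.ofIsIsoπApp _ j₀ fun j => ?_
  have hcm : c ≤ embZ (j.1 ⊓ c') := fun i => by simpa [embZ] using ⟨j.2 i, hcc' i⟩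
  let m : upInt c := ⟨j.1 ⊓ c', hcm⟩
  have hmc' : embZ m.1 ≤ embZ c' := embZ_mono inf_le_right
  exact ⟨m, ⟨homOfLE (show m.1 ≤ j.1 from inf_le_left)⟩,
    ⟨homOfLE (show m.1 ≤ c' from inf_le_right)⟩, isIso_coneN_π_app R _ N m (hα _ hcm hmc')⟩
end

section
/- Let M be a functor ℤⁿ → R-Mod, a ≤ b in ℤⁿ, u = (1,…,1). If M is [a+u,b]-determined (i.e. supp(M) ⊆ ↑(a+u) and for all c ≤ d in ℤⁿ with [a+u,b] ∩ ↓c = [a+u,b] ∩ ↓d, the map M(c ≤ d) is an isomorphism), then M ≅ res_π res_{[a,b]} M where π : ℤⁿ → [a,b] is the convex projection; i.e. M(π(c) ≤ c) : M(π(c)) → M(c) is an isomorphism for all c in the support, and M(c) = 0 = M(π(c)) otherwise. Conversely, if supp(M) ⊆ ↑a and M ≅ res_π res_{[a,b]} M, then M is [a+u,b]-determined. -/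
open Finset CategoryTheory

attribute [local instance 2000] Preorder.smallCategory

set_option linter.unusedSectionVars false
set_option synthInstance.maxHeartbeats 1000000
set_option maxHeartbeats 1000000

/-- `Mbar` is the canonical extension of `M` to `Z̄ⁿ`: it restricts to `M` on `ℤⁿ`, and
at every `c ∈ Z̄ⁿ` it is the limit `lim_{d ≥ c, d ∈ ℤⁿ} M(d)`, expressed elementwise. -/
def IsExtension {n : ℕ} {R : Type} [CommRing R] (M : (Fin n → ℤ) ⥤ ModuleCat R)
    (Mbar : (Fin n → WithBot ℤ) ⥤ ModuleCat R) : Prop :=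
  (embZ_mono.functor ⋙ Mbar = M) ∧
  ∀ c : Fin n → WithBot ℤ,
    (∀ x y : Mbar.obj c,
      (∀ (d : Fin n → ℤ) (h : c ≤ embZ d),
        Mbar.map (homOfLE h) x = Mbar.map (homOfLE h) y) → x = y) ∧
    (∀ f : ∀ d : Fin n → ℤ, c ≤ embZ d → Mbar.obj (embZ d),
      (∀ (d e : Fin n → ℤ) (hd : c ≤ embZ d) (he : c ≤ embZ e) (hde : d ≤ e),
        Mbar.map (homOfLE (embZ_mono hde)) (f d hd) = f e he) →
      ∃ x : Mbar.obj c, ∀ (d : Fin n → ℤ) (h : c ≤ embZ d), Mbar.map (homOfLE h) x = f d h)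

/-- `M` is `S`-determined: the support of `M` is contained in the upset generated by `S`,
and whenever `c ≤ d` with `S ∩ ↓c = S ∩ ↓d`, the structure map `M(c ≤ d)` is an isomorphism. -/
def SDet {C : Type*} [Preorder C] {R : Type} [CommRing R] (S : Set C) (M : C ⥤ ModuleCat R) :
    Prop :=
  (∀ c : C, (∃ x : M.obj c, x ≠ 0) → ∃ s ∈ S, s ≤ c) ∧
  ∀ (c d : C) (h : c ≤ d),
    S ∩ {x | x ≤ c} = S ∩ {x | x ≤ d} → IsIso (M.map (homOfLE h))

/-- The convex projection `ℤⁿ → [a,b]`. -/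
def proj {n : ℕ} (a b : Fin n → ℤ) (c : Fin n → ℤ) : Fin n → ℤ :=
  fun i => max (a i) (min (c i) (b i))

lemma proj_mono {n : ℕ} (a b : Fin n → ℤ) : Monotone (proj a b) :=
  fun _ _ h i => max_le_max le_rfl (min_le_min (h i) le_rfl)

/-- The interval `[a,b]` of `Z̄ⁿ` with infinitary points added:
in each coordinate either `−∞` or an integer of `[aᵢ, bᵢ]`. -/
def barIcc {n : ℕ} (a b : Fin n → ℤ) : Set (Fin n → WithBot ℤ) :=
  {c | ∀ i, c i = ⊥ ∨ ((a i : WithBot ℤ) ≤ c i ∧ c i ≤ (b i : WithBot ℤ))}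

/-- The representable module `R[Mor(s, −)]`. -/
noncomputable def RepM {C : Type} [Preorder C] (R : Type) [CommRing R] (s : C) :
    C ⥤ ModuleCat R :=
  coyoneda.obj (Opposite.op s) ⋙ ModuleCat.free R

/-- A functor module is finitely presented if it admits a presentation
`K → N → M → 0` by finite direct sums of representables. -/
noncomputable def FinPres {C : Type} [Preorder C] {R : Type} [CommRing R]
    (M : C ⥤ ModuleCat R) : Prop :=
  ∃ (p q : ℕ) (s : Fin p → C) (t : Fin q → C)
    (f : (∐ fun i => RepM R (s i)) ⟶ M)
    (g : (∐ fun j => RepM R (t j)) ⟶ (∐ fun i => RepM R (s i)))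
    (w : g ≫ f = 0), Epi f ∧ Epi (Limits.kernel.lift f g w)

/-!
Write `S = [a + 1, b]` and `π = proj a b`, so that `π c = a ⊔ (c ⊓ b)`. An element of `S` below
`c ⊔ a` is already below `c` (its coordinates exceed those of `a`) and hence below `π c`, so for
an `S`-determined `M` both maps `M(c) → M(c ⊔ a) ← M(π c)` are isomorphisms, naturally in `c`.

Conversely, let `M ≅ M ∘ π` with `supp M ⊆ ↑a`. If `M(c) ≠ 0` then `a + 1 ≤ c`: were `cᵢ = aᵢ`,
lowering `cᵢ` would leave `π c` unchanged while leaving `↑a`. Hence `a + 1 ∈ S`, and if `c ≤ d`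
with `S ∩ ↓c = S ∩ ↓d` and `M(c) ≠ 0` or `M(d) ≠ 0`, then `d ⊓ b ∈ S` lies below `c`, which
forces `π c = π d`.
-/

open Limits

namespace CategoryTheory

variable {D C E : Type*} [Category D] [Preorder C] [Category E]

def NatTrans.ofLE {F G : D ⥤ C} (h : ∀ X, F.obj X ≤ G.obj X) : F ⟶ G where
  app X := homOfLE (h X)

noncomputable def isoWhiskerRightOfLE {F G : D ⥤ C} (h : ∀ X, F.obj X ≤ G.obj X) (M : C ⥤ E)
    (hM : ∀ X, IsIso (M.map (homOfLE (h X)))) : F ⋙ M ≅ G ⋙ M :=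
  haveI : IsIso (Functor.whiskerRight (NatTrans.ofLE h) M) :=
    @NatIso.isIso_of_isIso_app _ _ _ _ _ _ _ hM
  asIso (Functor.whiskerRight (NatTrans.ofLE h) M)

end CategoryTheory

theorem ModuleCat.exists_ne_zero_iff_not_isZero {R : Type*} [Ring R] {X : ModuleCat R} :
    (∃ x : X, x ≠ 0) ↔ ¬IsZero X := by
  rw [isZero_iff_subsingleton, not_subsingleton_iff_nontrivial, nontrivial_iff_exists_ne 0]

theorem SDet.isIso_map_of_forall_le {C : Type*} [Preorder C] {R : Type} [CommRing R] {S : Set C}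
    {M : C ⥤ ModuleCat R} (hM : SDet S M) {c d : C} (hcd : c ≤ d)
    (h : ∀ s ∈ S, s ≤ d → s ≤ c) : IsIso (M.map (homOfLE hcd)) :=
  hM.2 c d hcd <| Set.ext fun _ =>
    ⟨fun hs => ⟨hs.1, hs.2.trans hcd⟩, fun hs => ⟨hs.1, h _ hs.1 hs.2⟩⟩

theorem le_of_le_sup_of_add_one_le {n : ℕ} {a c s : Fin n → ℤ} (hs : a + 1 ≤ s)
    (h : s ≤ c ⊔ a) : s ≤ c :=
  fun i => by
    have hsi : a i + 1 ≤ s i := hs i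
    have hci : s i ≤ max (c i) (a i) := h i
    show s i ≤ c i
    omega

namespace proj

variable {n : ℕ} {a b c d : Fin n → ℤ}

theorem eq_sup_inf : proj a b c = a ⊔ c ⊓ b := rfl

theorem le_sup : proj a b c ≤ c ⊔ a :=
  sup_le le_sup_right (inf_le_left.trans le_sup_left)

theorem le_of_le_sup {s : Fin n → ℤ} (hs : s ∈ Set.Icc (a + 1) b) (h : s ≤ c ⊔ a) :
    s ≤ proj a b c :=
  le_sup_of_le_right (le_inf (le_of_le_sup_of_add_one_le hs.1 h) hs.2)

theorem update_of_le (i : Fin n) {x : ℤ} (hx : x ≤ a i) (hc : c i ≤ a i) :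
    proj a b (Function.update c i x) = proj a b c := by
  funext j
  rcases eq_or_ne j i with rfl | hj
  · simp only [proj, Function.update_self]
    omega
  · simp only [proj, Function.update_of_ne hj]

theorem eq_of_inf_le (hcd : c ≤ d) (h : d ⊓ b ≤ c) : proj a b c = proj a b d := by
  rw [eq_sup_inf, eq_sup_inf, le_antisymm (inf_le_inf_right b hcd) (le_inf h inf_le_right)]

theorem add_one_le_right (h : a + 1 ≤ proj a b c) : a + 1 ≤ b :=
  fun i => by
    have hi : a i + 1 ≤ max (a i) (min (c i) (b i)) := h i
    simp only [Pi.add_apply, Pi.one_apply]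
    omega

end proj

section

variable {n : ℕ} {R : Type} [CommRing R] {a b : Fin n → ℤ} {M : (Fin n → ℤ) ⥤ ModuleCat R}

theorem SDet.nonempty_iso_proj (hM : SDet (Set.Icc (a + 1) b) M) :
    Nonempty ((proj_mono a b).functor ⋙ M ≅ M) := by
  let G : (Fin n → ℤ) ⥤ (Fin n → ℤ) :=
    Monotone.functor (f := (· ⊔ a)) fun _ _ h => sup_le_sup_right h a
  have hproj : ∀ c, IsIso (M.map (homOfLE (proj.le_sup : proj a b c ≤ c ⊔ a))) := fun c =>
    hM.isIso_map_of_forall_le _ fun _ hs h => proj.le_of_le_sup hs h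
  have hid : ∀ c, IsIso (M.map (homOfLE (le_sup_left : c ≤ c ⊔ a))) := fun c =>
    hM.isIso_map_of_forall_le _ fun _ hs h => le_of_le_sup_of_add_one_le hs.1 h
  exact ⟨isoWhiskerRightOfLE (G := G) (fun _ => proj.le_sup) M hproj ≪≫
    (isoWhiskerRightOfLE (F := 𝟭 _) (G := G) (fun _ => le_sup_left) M hid).symm ≪≫
    M.leftUnitor⟩

section

variable (hsupp : ∀ c, ¬IsZero (M.obj c) → a ≤ c) (e : (proj_mono a b).functor ⋙ M ≅ M)
include hsupp e

theorem add_one_le_of_not_isZero {c : Fin n → ℤ} (hc : ¬IsZero (M.obj c)) : a + 1 ≤ c := by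
  intro i
  by_contra hlt
  have hci : c i ≤ a i := by
    simp only [Pi.add_apply, Pi.one_apply] at hlt
    omega
  have hy : IsZero (M.obj (Function.update c i (a i - 1))) := by
    by_contra hy
    have := hsupp _ hy i
    simp only [Function.update_self] at this
    omega
  refine hc ((e.app c).isZero_iff.1 ?_)
  rw [Functor.comp_obj, Monotone.functor_obj, ← proj.update_of_le i (sub_one_lt (a i)).le hci]
  exact (e.app _).isZero_iff.2 hy

theorem add_one_le_right_of_not_isZero {c : Fin n → ℤ} (hc : ¬IsZero (M.obj c)) : a + 1 ≤ b :=
  proj.add_one_le_right <|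
    add_one_le_of_not_isZero hsupp e fun h => hc ((e.app c).isZero_iff.1 h)

theorem sDet_of_iso_proj : SDet (Set.Icc (a + 1) b) M := by
  refine ⟨fun c hc => ?_, fun c d hcd hS => ?_⟩
  · rw [ModuleCat.exists_ne_zero_iff_not_isZero] at hc
    exact ⟨a + 1, ⟨le_rfl, add_one_le_right_of_not_isZero hsupp e hc⟩,
      add_one_le_of_not_isZero hsupp e hc⟩
  by_cases hzero : IsZero (M.obj c) ∧ IsZero (M.obj d)
  · exact hzero.1.isIso hzero.2 _
  have ⟨hd, hb⟩ : a + 1 ≤ d ∧ a + 1 ≤ b := by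
    rcases not_and_or.1 hzero with hc | hd
    · exact ⟨(add_one_le_of_not_isZero hsupp e hc).trans hcd,
        add_one_le_right_of_not_isZero hsupp e hc⟩
    · exact ⟨add_one_le_of_not_isZero hsupp e hd, add_one_le_right_of_not_isZero hsupp e hd⟩
  have hmem : d ⊓ b ∈ Set.Icc (a + 1) b ∩ {x | x ≤ d} :=
    ⟨⟨le_inf hd hb, inf_le_right⟩, show d ⊓ b ≤ d from inf_le_left⟩
  rw [← hS] at hmem
  rw [← NatIso.isIso_map_iff e]
  have := homOfLE_isIso_of_eq (proj_mono a b hcd) (proj.eq_of_inf_le hcd hmem.2)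
  exact M.map_isIso (homOfLE (proj_mono a b hcd))

end

end

theorem stmt11_general (n : ℕ) (R : Type) [CommRing R] (a b : Fin n → ℤ)
    (M : (Fin n → ℤ) ⥤ ModuleCat R) :
    (SDet (Set.Icc (a + 1) b) M → Nonempty ((proj_mono a b).functor ⋙ M ≅ M)) ∧
    ((∀ c : Fin n → ℤ, (∃ x : M.obj c, x ≠ 0) → a ≤ c) →
      Nonempty ((proj_mono a b).functor ⋙ M ≅ M) → SDet (Set.Icc (a + 1) b) M) :=
  ⟨SDet.nonempty_iso_proj, fun hsupp ⟨e⟩ => sDet_of_iso_proj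
    (fun c hc => hsupp c (ModuleCat.exists_ne_zero_iff_not_isZero.2 hc)) e⟩

theorem stmt11 (n : ℕ) (R : Type) [CommRing R] (a b : Fin n → ℤ) (hab : a ≤ b)
    (M : (Fin n → ℤ) ⥤ ModuleCat R) :
    (SDet (Set.Icc (a + 1) b) M → Nonempty ((proj_mono a b).functor ⋙ M ≅ M)) ∧
    ((∀ c : Fin n → ℤ, (∃ x : M.obj c, x ≠ 0) → a ≤ c) →
      Nonempty ((proj_mono a b).functor ⋙ M ≅ M) → SDet (Set.Icc (a + 1) b) M) :=
  stmt11_general n R a b M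
end

section
/- Let M be a functor ℤⁿ → R-Mod whose extension M̄ to Z̄ⁿ (defined by M̄(c) = lim_{d ≥ c, d ∈ ℤⁿ} M(d)) is [a+u,b]̄-determined, where u = (1,…,1) and [a+u,b]̄ = ∏ᵢ ([aᵢ+1,bᵢ] ∪ {−∞}). Then for every c ∈ [a,b]̄ := ∏ᵢ([aᵢ,bᵢ] ∪ {−∞}), the map M̄(c ≤ β(c)) : M̄(c) → M(β(c)) is an isomorphism, where β(c)ᵢ = aᵢ if cᵢ = −∞ and β(c)ᵢ = cᵢ otherwise. In particular it suffices to show [a+u,b]̄ ∩ ↓c = [a+u,b]̄ ∩ ↓β(c). -/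
open Finset CategoryTheory

attribute [local instance 2000] Preorder.smallCategory

set_option linter.unusedSectionVars false
set_option synthInstance.maxHeartbeats 1000000
set_option maxHeartbeats 1000000

/-- `β(c)`: replace each `−∞` coordinate of `c` by the corresponding coordinate of `a`. -/
def bfloor {n : ℕ} (a : Fin n → ℤ) (c : Fin n → WithBot ℤ) : Fin n → ℤ :=
  fun i => WithBot.unbotD (a i) (c i)

lemma le_bfloor {n : ℕ} (a : Fin n → ℤ) (c : Fin n → WithBot ℤ) :
    c ≤ embZ (bfloor a c) := by
  intro i
  cases hc : c i with
  | bot => simp [embZ, bfloor, hc]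
  | coe m => simp [embZ, bfloor, hc]

lemma WithBot.le_coe_unbotD_iff {α : Type*} [Preorder α] {a : α} {x c : WithBot α}
    (hx : x = ⊥ ∨ (a : WithBot α) < x) : x ≤ ((c.unbotD a : α) : WithBot α) ↔ x ≤ c := by
  cases c with
  | coe m => rfl
  | bot =>
    rcases hx with rfl | hax
    · simp
    · have not_le_a : ¬x ≤ a := fun hxa => (hax.trans_le hxa).false
      exact iff_of_false not_le_a fun hxb => not_le_a (hxb.trans bot_le)

lemma barIcc_inter_Iic_bfloor {n : ℕ} (a b : Fin n → ℤ) (c : Fin n → WithBot ℤ) :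
    barIcc (a + 1) b ∩ {x | x ≤ c} = barIcc (a + 1) b ∩ {x | x ≤ embZ (bfloor a c)} := by
  ext x
  simp only [Set.mem_inter_iff, Set.mem_ofPred_eq, and_congr_right_iff]
  intro hx
  refine forall_congr' fun i => (WithBot.le_coe_unbotD_iff ?_).symm
  refine (hx i).imp_right fun h => lt_of_lt_of_le ?_ h.1
  exact WithBot.coe_lt_coe.mpr (lt_add_one (a i))

theorem stmt12_general (n : ℕ) (R : Type) [CommRing R] (a b : Fin n → ℤ)
    (Mbar : (Fin n → WithBot ℤ) ⥤ ModuleCat R)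
    (hdet : SDet (barIcc (a + 1) b) Mbar) :
    ∀ c ∈ barIcc a b,
      (barIcc (a + 1) b ∩ {x | x ≤ c} = barIcc (a + 1) b ∩ {x | x ≤ embZ (bfloor a c)}) ∧
      IsIso (Mbar.map (homOfLE (le_bfloor a c))) := fun c _ =>
  ⟨barIcc_inter_Iic_bfloor a b c, hdet.2 c _ (le_bfloor a c) (barIcc_inter_Iic_bfloor a b c)⟩

theorem stmt12 (n : ℕ) (R : Type) [CommRing R] (a b : Fin n → ℤ) (hab : a ≤ b)
    (M : (Fin n → ℤ) ⥤ ModuleCat R) (Mbar : (Fin n → WithBot ℤ) ⥤ ModuleCat R)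
    (hext : IsExtension M Mbar)
    (hdet : SDet (barIcc (a + 1) b) Mbar) :
    ∀ c ∈ barIcc a b,
      (barIcc (a + 1) b ∩ {x | x ≤ c} = barIcc (a + 1) b ∩ {x | x ≤ embZ (bfloor a c)}) ∧
      IsIso (Mbar.map (homOfLE (le_bfloor a c))) :=
  stmt12_general n R a b Mbar hdet
end

section
/- Let M be an Rℤⁿ-module encoded by the convex projection π : ℤⁿ → [a,b] (i.e. M(π(c) ≤ c) is an isomorphism for all c ∈ ℤⁿ). Then its extension M̄ to Z̄ⁿ, M̄(c) = lim_{d ≥ c, d ∈ ℤⁿ} M(d), is [a+u,b]̄-determined, where u = (1,…,1) and [a+u,b]̄ = ∏ᵢ([aᵢ+1,bᵢ] ∪ {−∞}): for all c ≤ d in Z̄ⁿ with [a+u,b]̄ ∩ ↓c = [a+u,b]̄ ∩ ↓d, the map M̄(c ≤ d) is an isomorphism, and supp(M̄) ⊆ ↑[a+u,b]̄ (which is all of Z̄ⁿ). -/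
open Finset CategoryTheory

attribute [local instance 2000] Preorder.smallCategory

set_option linter.unusedSectionVars false
set_option synthInstance.maxHeartbeats 1000000
set_option maxHeartbeats 1000000

/-
Extend the clamp `π` to `Z̄ⁿ` by reading `−∞` in coordinate `i` as `aᵢ`. If `c ≤ t` with `t ∈ ℤⁿ`
and `c` has the same clamp as `t`, every integer `e ∈ [c, t]` has `π e = π t`, so `M̄(e ≤ t)` is an
isomorphism; since `M̄(c)` is the limit of `M̄` over the integer points above `c`, which the meets
`e ⊓ t` index cofinally, `M̄(c ≤ t)` is an isomorphism too. If `S ∩ ↓c = S ∩ ↓d` for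
`S = [a+u,b]̄`, testing with the points of `S` that are `−∞` in all but one coordinate shows that
`c` and `d` have the same clamp; for `t` the integer lift of `d`, both `M̄(c ≤ t)` and `M̄(d ≤ t)`
are then isomorphisms, hence so is `M̄(c ≤ d)`.
-/

section ExtensionMaps

variable {R : Type} [CommRing R]

lemma map_homOfLE_map_homOfLE {C : Type*} [Preorder C] (F : C ⥤ ModuleCat R) {u v w : C}
    (h₁ : u ≤ v) (h₂ : v ≤ w) (x : F.obj u) :
    F.map (homOfLE h₂) (F.map (homOfLE h₁) x) = F.map (homOfLE (h₁.trans h₂)) x := by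
  rw [show homOfLE (h₁.trans h₂) = homOfLE h₁ ≫ homOfLE h₂ from rfl, F.map_comp]
  rfl

variable {n : ℕ}

lemma embZ_inf (e t : Fin n → ℤ) : embZ (e ⊓ t) = embZ e ⊓ embZ t :=
  funext fun i => WithBot.coe_min (e i) (t i)

lemma IsExtension.map_bijective {M : (Fin n → ℤ) ⥤ ModuleCat R}
    {Mbar : (Fin n → WithBot ℤ) ⥤ ModuleCat R} (hext : IsExtension M Mbar)
    {c : Fin n → WithBot ℤ} {t : Fin n → ℤ} (hct : c ≤ embZ t)
    (hbetween : ∀ (e : Fin n → ℤ) (_ : c ≤ embZ e) (het : e ≤ t),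
      Function.Bijective (Mbar.map (homOfLE (embZ_mono het)))) :
    Function.Bijective (Mbar.map (homOfLE hct)) := by
  obtain ⟨hsep, hglue⟩ := hext.2 c
  have hmeet (e : Fin n → ℤ) (he : c ≤ embZ e) : c ≤ embZ (e ⊓ t) :=
    (embZ_inf e t).symm ▸ le_inf he hct
  have hbij (e : Fin n → ℤ) (he : c ≤ embZ e) :=
    hbetween (e ⊓ t) (hmeet e he) inf_le_right
  constructor
  · intro x y hxy
    refine hsep x y fun e he => ?_
    have hmeet_eq : Mbar.map (homOfLE (hmeet e he)) x = Mbar.map (homOfLE (hmeet e he)) y :=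
      (hbij e he).1 (by simpa only [map_homOfLE_map_homOfLE] using hxy)
    simpa only [map_homOfLE_map_homOfLE] using
      congrArg (Mbar.map (homOfLE (embZ_mono (inf_le_left : e ⊓ t ≤ e)))) hmeet_eq
  · intro z
    choose G hG using fun e (he : c ≤ embZ e) => (hbij e he).2 z
    obtain ⟨x, hx⟩ := hglue
      (fun e he => Mbar.map (homOfLE (embZ_mono (inf_le_left : e ⊓ t ≤ e))) (G e he))
      (fun d e hd he hde => by
        have hGde : Mbar.map (homOfLE (embZ_mono (inf_le_inf_right t hde))) (G d hd) = G e he :=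
          (hbij e he).1 (by simp only [map_homOfLE_map_homOfLE, hG])
        simp only [map_homOfLE_map_homOfLE, ← hGde])
    exact ⟨x, (hx t hct).trans (hG t hct)⟩

end ExtensionMaps

section Clamp

variable {n : ℕ} (a b : Fin n → ℤ)

def liftBot (x : Fin n → WithBot ℤ) : Fin n → ℤ := fun i => (x i).unbotD (a i)

lemma le_embZ_liftBot (x : Fin n → WithBot ℤ) : x ≤ embZ (liftBot a x) := by
  intro i
  cases h : x i <;> simp [embZ, liftBot, h]

lemma proj_liftBot_le {x : Fin n → WithBot ℤ} {e : Fin n → ℤ} (hxe : x ≤ embZ e) :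
    proj a b (liftBot a x) ≤ proj a b e := by
  intro i
  have hi := hxe i
  simp only [proj, liftBot, embZ] at hi ⊢
  cases h : x i with
  | bot => simp only [WithBot.unbotD_bot]; omega
  | coe k =>
    rw [h, WithBot.coe_le_coe] at hi
    simp only [WithBot.unbotD_coe]; omega

lemma bot_mem_barIcc : (⊥ : Fin n → WithBot ℤ) ∈ barIcc a b := fun _ => Or.inl rfl

lemma update_bot_mem_barIcc {i : Fin n} {v : ℤ} (hav : a i ≤ v) (hvb : v ≤ b i) :
    Function.update ⊥ i (v : WithBot ℤ) ∈ barIcc a b := by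
  intro j
  rcases eq_or_ne j i with rfl | hji
  · simp [hav, hvb]
  · simp [hji]

lemma proj_liftBot_le_of_barIcc_le {c d : Fin n → WithBot ℤ}
    (hdc : ∀ s ∈ barIcc (a + 1) b, s ≤ d → s ≤ c) :
    proj a b (liftBot a d) ≤ proj a b (liftBot a c) := by
  intro i
  by_contra! hlt
  set v := proj a b (liftBot a d) i with hv
  simp only [proj, liftBot] at hv hlt
  obtain ⟨k, hdk⟩ : ∃ k : ℤ, d i = k := by
    cases h : d i with
    | bot => rw [h, WithBot.unbotD_bot] at hv; omega
    | coe k => exact ⟨k, rfl⟩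
  rw [hdk, WithBot.unbotD_coe] at hv
  -- the point of `[a+u,b]̄` that is `v` in coordinate `i` and `−∞` elsewhere lies below `d`
  have hsc : Function.update ⊥ i (v : WithBot ℤ) ≤ c :=
    hdc _ (update_bot_mem_barIcc (a + 1) b (by simp only [Pi.add_apply, Pi.one_apply]; omega)
      (by omega)) (update_le_iff.2 ⟨by rw [hdk, WithBot.coe_le_coe]; omega, fun _ _ => bot_le⟩)
  have hvc := (update_le_iff.1 hsc).1
  cases h : c i with
  | bot => simp [h] at hvc
  | coe m =>
    rw [h, WithBot.coe_le_coe] at hvc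
    rw [h, WithBot.unbotD_coe] at hlt
    omega

end Clamp

lemma isIso_map_of_proj_eq {n : ℕ} {D : Type*} [Category D] {a b : Fin n → ℤ}
    {M : (Fin n → ℤ) ⥤ D} (η : (proj_mono a b).functor ⋙ M ≅ M)
    {e e' : Fin n → ℤ} (h : e ≤ e') (hp : proj a b e = proj a b e') :
    IsIso (M.map (homOfLE h)) := by
  rw [← NatIso.isIso_map_iff η]
  change IsIso (M.map ((proj_mono a b).functor.map (homOfLE h)))
  rw [show (proj_mono a b).functor.map (homOfLE h) = eqToHom hp from Subsingleton.elim _ _]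
  exact Functor.map_isIso M (eqToHom hp)

lemma IsExtension.isIso_map_of_proj_liftBot_eq {n : ℕ} {R : Type} [CommRing R] {a b : Fin n → ℤ}
    {M : (Fin n → ℤ) ⥤ ModuleCat R} {Mbar : (Fin n → WithBot ℤ) ⥤ ModuleCat R}
    (hext : IsExtension M Mbar) (η : (proj_mono a b).functor ⋙ M ≅ M)
    {c : Fin n → WithBot ℤ} {t : Fin n → ℤ} (hct : c ≤ embZ t)
    (hp : proj a b (liftBot a c) = proj a b t) :
    IsIso (Mbar.map (homOfLE hct)) := by
  refine (ConcreteCategory.isIso_iff_bijective _).2 (hext.map_bijective hct fun e hce het => ?_)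
  have hpe : proj a b e = proj a b t :=
    le_antisymm (proj_mono a b het) (hp ▸ proj_liftBot_le a b hce)
  obtain ⟨rfl, -⟩ := hext
  have := isIso_map_of_proj_eq η het hpe
  exact ConcreteCategory.bijective_of_isIso ((embZ_mono.functor ⋙ Mbar).map (homOfLE het))

theorem stmt14_general (n : ℕ) (R : Type) [CommRing R] (a b : Fin n → ℤ)
    (M : (Fin n → ℤ) ⥤ ModuleCat R) (Mbar : (Fin n → WithBot ℤ) ⥤ ModuleCat R)
    (hext : IsExtension M Mbar)
    (henc : Nonempty ((proj_mono a b).functor ⋙ M ≅ M)) :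
    SDet (barIcc (a + 1) b) Mbar := by
  obtain ⟨η⟩ := henc
  refine ⟨fun _ _ => ⟨⊥, bot_mem_barIcc _ _, bot_le⟩, fun c d hcd hS => ?_⟩
  have hd : d ≤ embZ (liftBot a d) := le_embZ_liftBot a d
  have hc : c ≤ embZ (liftBot a d) := hcd.trans hd
  have hp : proj a b (liftBot a c) = proj a b (liftBot a d) :=
    le_antisymm (proj_liftBot_le a b hc) <| proj_liftBot_le_of_barIcc_le a b fun s hs hsd =>
      (show s ∈ barIcc (a + 1) b ∩ {x | x ≤ c} from hS ▸ ⟨hs, hsd⟩).2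
  have hcIso := hext.isIso_map_of_proj_liftBot_eq η hc hp
  have := hext.isIso_map_of_proj_liftBot_eq η hd rfl
  rw [show homOfLE hc = homOfLE hcd ≫ homOfLE hd from rfl, Mbar.map_comp] at hcIso
  exact IsIso.of_isIso_comp_right _ (Mbar.map (homOfLE hd))

theorem stmt14 (n : ℕ) (R : Type) [CommRing R] (a b : Fin n → ℤ) (hab : a ≤ b)
    (M : (Fin n → ℤ) ⥤ ModuleCat R) (Mbar : (Fin n → WithBot ℤ) ⥤ ModuleCat R)
    (hext : IsExtension M Mbar)
    (henc : Nonempty ((proj_mono a b).functor ⋙ M ≅ M)) :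
    SDet (barIcc (a + 1) b) Mbar :=
  stmt14_general n R a b M Mbar hext henc
end
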